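/- In the GLM setup, suppose max_i u′(z_iᵀβ_{0n})² v(z_iᵀβ_{0n}) ≤ W < ∞, λ_max(n⁻¹ Σ_i z_i z_iᵀ) ≤ C_max, and λ_min(F_n(β_{0n})) ≥ c·n for some c > 0. Then for every t > 0, P(‖F_n⁻¹(β_{0n}) S_n(β_{0n})‖ > t √(p_n/n)) ≤ W C_max/(c² t²); in particular ‖F_n⁻¹(β_{0n}) S_n(β_{0n})‖ = O_p(√(p_n/n)). -/

import Mathlib

open Filter MeasureTheory ProbabilityTheory Matrix Finset
open scoped BigOperators ENNReal NNReal Topology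

noncomputable section

namespace GLMPaper

/-- Squared Euclidean norm of a finite real vector. -/
def sqNorm {m : ℕ} (x : Fin m → ℝ) : ℝ := ∑ i, x i ^ 2

/-- Euclidean norm of a finite real vector. -/
def eNorm {m : ℕ} (x : Fin m → ℝ) : ℝ := Real.sqrt (sqNorm x)

/-- The GLM weight function `w(t) = h'(t)² v(t)⁻¹`. -/
def wFun (h v : ℝ → ℝ) (t : ℝ) : ℝ := (deriv h t) ^ 2 * (v t)⁻¹

/-- Fisher information matrix `F(β) = ∑ i, w(zᵢᵀβ) zᵢ zᵢᵀ`. -/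
def fisher {m pn : ℕ} (z : Fin m → Fin pn → ℝ) (h v : ℝ → ℝ) (β : Fin pn → ℝ) :
    Matrix (Fin pn) (Fin pn) ℝ :=
  ∑ i, wFun h v (z i ⬝ᵥ β) • vecMulVec (z i) (z i)

/-- Score function `S(β) = ∑ i, u'(zᵢᵀβ)(yᵢ - h(zᵢᵀβ)) zᵢ`. -/
def score {Ω : Type*} {m pn : ℕ} (z : Fin m → Fin pn → ℝ) (h u : ℝ → ℝ)
    (y : Fin m → Ω → ℝ) (β : Fin pn → ℝ) (ω : Ω) : Fin pn → ℝ :=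
  ∑ i, (deriv u (z i ⬝ᵥ β) * (y i ω - h (z i ⬝ᵥ β))) • z i

/-- Hessian of the log-likelihood, `H(β) = R(β) - F(β)` where
`R(β) = ∑ i, u''(zᵢᵀβ)(yᵢ - h(zᵢᵀβ)) zᵢ zᵢᵀ`. -/
def hessian {Ω : Type*} {m pn : ℕ} (z : Fin m → Fin pn → ℝ) (h u v : ℝ → ℝ)
    (y : Fin m → Ω → ℝ) (β : Fin pn → ℝ) (ω : Ω) : Matrix (Fin pn) (Fin pn) ℝ :=
  (∑ i, (deriv (deriv u) (z i ⬝ᵥ β) * (y i ω - h (z i ⬝ᵥ β))) • vecMulVec (z i) (z i))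
    - fisher z h v β

/-- The neighbourhood `B(δ) = {β : p⁻¹ᐟ² ‖F¹ᐟ² (β - β₀)‖ ≤ δ}` (for `Fsqrt = F¹ᐟ²`). -/
def Bball {pn : ℕ} (Fsqrt : Matrix (Fin pn) (Fin pn) ℝ) (β0 : Fin pn → ℝ) (δ : ℝ) :
    Set (Fin pn → ℝ) :=
  {β | eNorm (Fsqrt *ᵥ (β - β0)) ≤ δ * Real.sqrt pn}

/-- Convergence in probability to zero for a sequence of real random variables. -/
def TendstoInProb {Ω : Type*} [MeasurableSpace Ω] (P : Measure Ω) (X : ℕ → Ω → ℝ) : Prop :=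
  ∀ ε : ℝ, 0 < ε → Tendsto (fun n => P {ω | ε ≤ |X n ω|}) atTop (𝓝 0)

/-- `X n = O_p(a n)`: stochastic boundedness at rate `a`. -/
def IsBigOP {Ω : Type*} [MeasurableSpace Ω] (P : Measure Ω) (X : ℕ → Ω → ℝ) (a : ℕ → ℝ) :
    Prop :=
  ∀ ε : ℝ, 0 < ε → ∃ M : ℝ, ∀ᶠ n in atTop, P {ω | M * a n < |X n ω|} ≤ ENNReal.ofReal ε

/-- Convergence in distribution to the standard normal law, stated via pointwise convergence
of cumulative distribution functions (the standard normal cdf is continuous everywhere, so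
this is equivalent to weak convergence of the laws). -/
def TendstoStdGaussian {Ω : Type*} [MeasurableSpace Ω] (P : Measure Ω) (X : ℕ → Ω → ℝ) :
    Prop :=
  ∀ t : ℝ, Tendsto (fun n => P {ω | X n ω ≤ t}) atTop (𝓝 (gaussianReal 0 1 (Set.Iic t)))

lemma sqNorm_nonneg {m : ℕ} (x : Fin m → ℝ) : 0 ≤ sqNorm x :=
  Finset.sum_nonneg fun _ _ => sq_nonneg _

lemma eNorm_nonneg {m : ℕ} (x : Fin m → ℝ) : 0 ≤ eNorm x := Real.sqrt_nonneg _

lemma eq_zero_of_sqNorm_eq_zero {m : ℕ} {x : Fin m → ℝ} (hx : sqNorm x = 0) : x = 0 := by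
  funext i
  have h := (Finset.sum_eq_zero_iff_of_nonneg (fun i _ => sq_nonneg (x i))).1 hx i (mem_univ i)
  exact pow_eq_zero_iff two_ne_zero |>.1 h

lemma sqNorm_smul {m : ℕ} (c : ℝ) (x : Fin m → ℝ) : sqNorm (c • x) = c ^ 2 * sqNorm x := by
  simp [sqNorm, Finset.mul_sum, mul_pow]

lemma dot_sum_vecMulVec {m q : ℕ} (f : Fin m → Fin q → ℝ) (x : Fin q → ℝ) :
    x ⬝ᵥ ((∑ i, vecMulVec (f i) (f i)) *ᵥ x) = ∑ i, (f i ⬝ᵥ x) ^ 2 := by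
  simp only [dotProduct, mulVec, Matrix.sum_apply, vecMulVec_apply, Finset.sum_apply]
  calc ∑ j, x j * ∑ k, (∑ i, f i j * f i k) * x k
      = ∑ j, ∑ i, (f i j * x j) * ∑ k, f i k * x k := by
        refine Finset.sum_congr rfl fun j _ => ?_
        rw [Finset.mul_sum]
        rw [show (∑ k, x j * ((∑ i, f i j * f i k) * x k))
            = ∑ k, ∑ i, (f i j * x j) * (f i k * x k) from
          Finset.sum_congr rfl fun k _ => by
            rw [Finset.sum_mul, Finset.mul_sum]
            exact Finset.sum_congr rfl fun i _ => by ring]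
        rw [Finset.sum_comm]
        exact Finset.sum_congr rfl fun i _ => (Finset.mul_sum _ _ _).symm
    _ = ∑ i, ∑ j, (f i j * x j) * ∑ k, f i k * x k := Finset.sum_comm
    _ = ∑ i, (∑ j, f i j * x j) ^ 2 := by
        refine Finset.sum_congr rfl fun i _ => ?_
        rw [pow_two, ← Finset.sum_mul]

lemma sqNorm_single {q : ℕ} (j : Fin q) : sqNorm (Pi.single j (1:ℝ)) = 1 := by
  simp [sqNorm, Pi.single_apply, ite_pow]

lemma sqNorm_inv_mulVec_le {m : ℕ} (F : Matrix (Fin m) (Fin m) ℝ) (cn : ℝ) (hcn : 0 < cn)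
    (hF : ∀ x, cn * sqNorm x ≤ x ⬝ᵥ (F *ᵥ x)) (x : Fin m → ℝ) :
    sqNorm (F⁻¹ *ᵥ x) ≤ sqNorm x / cn ^ 2 := by
  have hinj : Function.Injective F.mulVec := by
    intro a b hab
    have h0 : F *ᵥ (a - b) = 0 := by
      show F.mulVec (a - b) = 0
      rw [Matrix.mulVec_sub, hab, sub_self]
    have h1 := hF (a - b)
    rw [h0, dotProduct_zero] at h1
    have h2 : sqNorm (a - b) = 0 := by nlinarith [sqNorm_nonneg (a - b)]
    exact sub_eq_zero.1 (eq_zero_of_sqNorm_eq_zero h2)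
  have hdet : IsUnit F.det :=
    (Matrix.isUnit_iff_isUnit_det F).1 (Matrix.mulVec_injective_iff_isUnit.1 hinj)
  set yv := F⁻¹ *ᵥ x with hyv
  have hxy : F *ᵥ yv = x := by
    rw [hyv, Matrix.mulVec_mulVec, Matrix.mul_nonsing_inv _ hdet, Matrix.one_mulVec]
  have hkey : cn * sqNorm yv ≤ yv ⬝ᵥ x := by
    have := hF yv; rwa [hxy] at this
  have hCS : (yv ⬝ᵥ x) ^ 2 ≤ sqNorm yv * sqNorm x := by
    simpa [sqNorm, dotProduct] using Finset.sum_mul_sq_le_sq_mul_sq Finset.univ yv x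
  rcases eq_or_lt_of_le (sqNorm_nonneg yv) with hs | hs
  · rw [← hs]; exact div_nonneg (sqNorm_nonneg x) (by positivity)
  · rw [le_div_iff₀ (by positivity)]
    have h3 : (cn * sqNorm yv) * (cn * sqNorm yv) ≤ (yv ⬝ᵥ x) * (yv ⬝ᵥ x) :=
      mul_self_le_mul_self (mul_nonneg hcn.le (sqNorm_nonneg yv)) hkey
    nlinarith [h3, hCS, hs]

lemma cheb {Ω : Type*} [MeasurableSpace Ω] (P : Measure Ω) (g : Ω → ℝ) (hg : Measurable g)
    (hgnn : ∀ ω, 0 ≤ g ω) (hgi : Integrable g P) (t2 : ℝ) (ht2 : 0 < t2) :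
    P {ω | t2 ≤ g ω} ≤ ENNReal.ofReal ((∫ ω, g ω ∂P) / t2) := by
  have hmark := mul_meas_ge_le_lintegral₀ (μ := P)
    (f := fun ω => ENNReal.ofReal (g ω)) (hg.ennreal_ofReal.aemeasurable) (ENNReal.ofReal t2)
  have hset : {ω | ENNReal.ofReal t2 ≤ ENNReal.ofReal (g ω)} = {ω | t2 ≤ g ω} := by
    ext ω; simp [ENNReal.ofReal_le_ofReal_iff (hgnn ω)]
  rw [hset] at hmark
  have hlin : ∫⁻ ω, ENNReal.ofReal (g ω) ∂P = ENNReal.ofReal (∫ ω, g ω ∂P) :=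
    (ofReal_integral_eq_lintegral_ofReal hgi (Filter.Eventually.of_forall hgnn)).symm
  rw [hlin] at hmark
  rw [ENNReal.ofReal_div_of_pos ht2]
  rw [ENNReal.le_div_iff_mul_le (Or.inl (by simp [ht2])) (Or.inl ENNReal.ofReal_ne_top)]
  rwa [mul_comm]


/-- **Chebyshev bound (41) of the proofs.**
In the GLM setup, if `maxᵢ u'(zᵢᵀβ₀ₙ)² v(zᵢᵀβ₀ₙ) ≤ W < ∞`,
`λ_max(n⁻¹ ∑ zᵢzᵢᵀ) ≤ C_max`, and `λ_min(Fₙ(β₀ₙ)) ≥ c n` for some `c > 0` (both in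
Rayleigh form), then for every `t > 0`,
`P(‖Fₙ⁻¹(β₀ₙ) Sₙ(β₀ₙ)‖ > t √(pₙ/n)) ≤ W C_max/(c² t²)`; in particular
`‖Fₙ⁻¹(β₀ₙ) Sₙ(β₀ₙ)‖ = O_p(√(pₙ/n))`. -/
theorem inverse_fisher_score_bound
    {Ω : Type*} [MeasurableSpace Ω] (P : Measure Ω) [IsProbabilityMeasure P]
    (p : ℕ → ℕ) (z : ∀ n : ℕ, Fin n → Fin (p n) → ℝ)
    (y : ∀ n : ℕ, Fin n → Ω → ℝ) (β0 : ∀ n : ℕ, Fin (p n) → ℝ)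
    (h u v : ℝ → ℝ)
    (hmeas : ∀ n i, Measurable (y n i))
    (hL2 : ∀ n i, MemLp (y n i) 2 P)
    (hindep : ∀ n, iIndepFun (y n) P)
    (hmean : ∀ n i, ∫ ω, y n i ω ∂P = h (z n i ⬝ᵥ β0 n))
    (hvar : ∀ n i, ∫ ω, (y n i ω - h (z n i ⬝ᵥ β0 n)) ^ 2 ∂P = v (z n i ⬝ᵥ β0 n))
    (W Cmax c : ℝ) (hc : 0 < c)
    (hW : ∀ n i, (deriv u (z n i ⬝ᵥ β0 n)) ^ 2 * v (z n i ⬝ᵥ β0 n) ≤ W)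
    (hCmax : ∀ n, ∀ x : Fin (p n) → ℝ,
      x ⬝ᵥ ((∑ i, vecMulVec (z n i) (z n i)) *ᵥ x) ≤ Cmax * n * sqNorm x)
    (hFmin : ∀ n, ∀ x : Fin (p n) → ℝ,
      c * n * sqNorm x ≤ x ⬝ᵥ (fisher (z n) h v (β0 n) *ᵥ x)) :
    (∀ n, 0 < n → ∀ t : ℝ, 0 < t →
      P {ω | t * Real.sqrt ((p n : ℝ) / (n : ℝ)) <
          eNorm ((fisher (z n) h v (β0 n))⁻¹ *ᵥ score (z n) h u (y n) (β0 n) ω)}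
        ≤ ENNReal.ofReal (W * Cmax / (c ^ 2 * t ^ 2))) ∧
    IsBigOP P
      (fun n ω => eNorm ((fisher (z n) h v (β0 n))⁻¹ *ᵥ score (z n) h u (y n) (β0 n) ω))
      (fun n => Real.sqrt ((p n : ℝ) / (n : ℝ))) := by
  have key : ∀ n, 0 < n → ∀ t : ℝ, 0 < t →
      P {ω | t * Real.sqrt ((p n : ℝ) / (n : ℝ)) <
          eNorm ((fisher (z n) h v (β0 n))⁻¹ *ᵥ score (z n) h u (y n) (β0 n) ω)}
        ≤ ENNReal.ofReal (W * Cmax / (c ^ 2 * t ^ 2)) := by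
    intro n hn t ht
    by_cases hp : p n = 0
    · have hempty : IsEmpty (Fin (p n)) := by rw [hp]; infer_instance
      have hset : {ω | t * Real.sqrt ((p n : ℝ) / (n : ℝ)) <
          eNorm ((fisher (z n) h v (β0 n))⁻¹ *ᵥ score (z n) h u (y n) (β0 n) ω)} = ∅ := by
        ext ω
        simp only [Set.mem_setOf_eq, Set.mem_empty_iff_false, iff_false, not_lt]
        have h1 : sqNorm ((fisher (z n) h v (β0 n))⁻¹ *ᵥ score (z n) h u (y n) (β0 n) ω) = 0 := by
          rw [sqNorm, Finset.univ_eq_empty, Finset.sum_empty]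
        rw [eNorm, h1, Real.sqrt_zero, hp]
        simp
      rw [hset, measure_empty]; exact zero_le
    · have hp' : 0 < p n := Nat.pos_of_ne_zero hp
      set F := fisher (z n) h v (β0 n) with hFdef
      set a : Fin n → ℝ := fun i => deriv u (z n i ⬝ᵥ β0 n) with ha
      set X : Fin n → Ω → ℝ := fun i ω => y n i ω - h (z n i ⬝ᵥ β0 n) with hX
      set wv : Fin n → Fin (p n) → ℝ := fun i => a i • (F⁻¹ *ᵥ z n i) with hwv
      have hvnn : ∀ i : Fin n, 0 ≤ v (z n i ⬝ᵥ β0 n) := fun i => by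
        rw [← hvar n i]; exact integral_nonneg fun ω => sq_nonneg _
      have hW0 : 0 ≤ W := le_trans (mul_nonneg (sq_nonneg _) (hvnn ⟨0, hn⟩)) (hW n ⟨0, hn⟩)
      have hn' : (0:ℝ) < n := Nat.cast_pos.2 hn
      have hp'' : (0:ℝ) < p n := Nat.cast_pos.2 hp'
      have hcol : ∀ j : Fin (p n), ∑ i, (z n i j) ^ 2 ≤ Cmax * n := by
        intro j
        have h1 := hCmax n (Pi.single j 1)
        rw [dot_sum_vecMulVec, sqNorm_single, mul_one] at h1
        calc ∑ i, (z n i j) ^ 2 = ∑ i, (z n i ⬝ᵥ Pi.single j 1) ^ 2 := by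
              refine Finset.sum_congr rfl fun i _ => ?_
              rw [dotProduct_single, mul_one]
          _ ≤ Cmax * n := h1
      have htr : ∑ i, sqNorm (z n i) ≤ Cmax * n * p n := by
        have h1 : ∑ i, sqNorm (z n i) = ∑ j : Fin (p n), ∑ i : Fin n, (z n i j) ^ 2 := by
          simp only [sqNorm]; exact Finset.sum_comm
        rw [h1]
        calc ∑ j : Fin (p n), ∑ i, (z n i j) ^ 2 ≤ ∑ _j : Fin (p n), Cmax * n :=
              Finset.sum_le_sum fun j _ => hcol j
          _ = Cmax * n * p n := by
              rw [Finset.sum_const, Finset.card_univ, Fintype.card_fin, nsmul_eq_mul]; ring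
      have hspec : ∀ x : Fin (p n) → ℝ, sqNorm (F⁻¹ *ᵥ x) ≤ sqNorm x / (c * n) ^ 2 :=
        sqNorm_inv_mulVec_le F (c * n) (by positivity) (fun x => hFmin n x)
      have hX2 : ∀ i, MemLp (X i) 2 P := fun i => (hL2 n i).sub (memLp_const _)
      have hXint : ∀ i, Integrable (X i) P := fun i => (hX2 i).integrable one_le_two
      have hXmeas : ∀ i, Measurable (X i) := fun i => (hmeas n i).sub measurable_const
      have hXmean : ∀ i, ∫ ω, X i ω ∂P = 0 := fun i => by
        rw [hX]
        rw [integral_sub ((hL2 n i).integrable one_le_two) (integrable_const _), hmean n i,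
          integral_const]
        simp
      have hXmul : ∀ i k, Integrable (fun ω => X i ω * X k ω) P := fun i k => by
        have h1 : MemLp (X i • X k) 1 P :=
          MemLp.smul (r := 1) (hX2 k) (hX2 i)
        exact h1.integrable le_rfl
      have hcov : ∀ i k, i ≠ k → ∫ ω, X i ω * X k ω ∂P = 0 := by
        intro i k hik
        have hind : IndepFun (X i) (X k) P :=
          ((hindep n).indepFun hik).comp (measurable_id.sub measurable_const)
            (measurable_id.sub measurable_const)
        have h2 := IndepFun.integral_mul_eq_mul_integral hind (hXint i).aestronglyMeasurable
          (hXint k).aestronglyMeasurable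
        calc ∫ ω, X i ω * X k ω ∂P = ∫ ω, (X i * X k) ω ∂P := rfl
          _ = (∫ ω, X i ω ∂P) * ∫ ω, X k ω ∂P := h2
          _ = 0 := by rw [hXmean i, hXmean k, mul_zero]
      have hXsq : ∀ i, ∫ ω, X i ω * X i ω ∂P = v (z n i ⬝ᵥ β0 n) := fun i => by
        rw [← hvar n i]
        refine integral_congr_ae (Filter.Eventually.of_forall fun ω => ?_)
        simp only [hX]; ring
      have hid : ∀ ω, F⁻¹ *ᵥ score (z n) h u (y n) (β0 n) ω
          = fun j => ∑ i, X i ω * wv i j := by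
        intro ω
        have h1 : score (z n) h u (y n) (β0 n) ω = ∑ i, (a i * X i ω) • z n i := rfl
        rw [h1]
        have h2 : F⁻¹ *ᵥ (∑ i, (a i * X i ω) • z n i)
            = ∑ i, F⁻¹ *ᵥ ((a i * X i ω) • z n i) := by
          have h3 := map_sum (Matrix.mulVecLin F⁻¹) (fun i => (a i * X i ω) • z n i) Finset.univ
          simp only [Matrix.mulVecLin_apply] at h3
          exact h3
        rw [h2]
        funext j
        rw [Finset.sum_apply]
        refine Finset.sum_congr rfl fun i _ => ?_
        rw [Matrix.mulVec_smul]
        simp only [hwv, Pi.smul_apply, smul_eq_mul]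
        ring
      set g : Ω → ℝ := fun ω => ∑ j : Fin (p n), ∑ i : Fin n, ∑ k : Fin n,
          (wv i j * wv k j) * (X i ω * X k ω) with hg
      have hgterm : ∀ ω, sqNorm (F⁻¹ *ᵥ score (z n) h u (y n) (β0 n) ω) = g ω := by
        intro ω
        rw [hid ω, hg]
        calc sqNorm (fun j => ∑ i, X i ω * wv i j)
            = ∑ j, (∑ i, X i ω * wv i j) ^ 2 := rfl
          _ = ∑ j : Fin (p n), ∑ i : Fin n, ∑ k : Fin n,
              (wv i j * wv k j) * (X i ω * X k ω) := by
              refine Finset.sum_congr rfl fun j _ => ?_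
              rw [pow_two, Finset.sum_mul_sum]
              exact Finset.sum_congr rfl fun i _ => Finset.sum_congr rfl fun k _ => by ring
      have hgnn : ∀ ω, 0 ≤ g ω := fun ω => (hgterm ω) ▸ sqNorm_nonneg _
      have hgmeas : Measurable g := by
        rw [hg]
        refine Finset.measurable_sum _ fun j _ => Finset.measurable_sum _ fun i _ =>
          Finset.measurable_sum _ fun k _ => ?_
        exact ((hXmeas i).mul (hXmeas k)).const_mul _
      have hgint : Integrable g P := by
        rw [hg]
        exact integrable_finset_sum _ fun j _ => integrable_finset_sum _ fun i _ =>
          integrable_finset_sum _ fun k _ => (hXmul i k).const_mul _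
      have hE : ∫ ω, g ω ∂P = ∑ i, v (z n i ⬝ᵥ β0 n) * sqNorm (wv i) := by
        simp only [hg]
        calc ∫ ω, ∑ j : Fin (p n), ∑ i : Fin n, ∑ k : Fin n,
              (wv i j * wv k j) * (X i ω * X k ω) ∂P
            = ∑ j : Fin (p n), ∑ i : Fin n, ∑ k : Fin n,
              (wv i j * wv k j) * ∫ ω, X i ω * X k ω ∂P := by
              rw [integral_finset_sum _ (fun j _ => integrable_finset_sum _ fun i _ =>
                integrable_finset_sum _ fun k _ => (hXmul i k).const_mul _)]
              refine Finset.sum_congr rfl fun j _ => ?_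
              rw [integral_finset_sum _ (fun i _ => integrable_finset_sum _ fun k _ =>
                (hXmul i k).const_mul _)]
              refine Finset.sum_congr rfl fun i _ => ?_
              rw [integral_finset_sum _ (fun k _ => (hXmul i k).const_mul _)]
              exact Finset.sum_congr rfl fun k _ => integral_const_mul _ _
          _ = ∑ j : Fin (p n), ∑ i : Fin n, (wv i j * wv i j) * v (z n i ⬝ᵥ β0 n) := by
              refine Finset.sum_congr rfl fun j _ => Finset.sum_congr rfl fun i _ => ?_
              rw [Finset.sum_eq_single i]
              · rw [hXsq i]
              · intro k _ hk
                rw [hcov i k (Ne.symm hk), mul_zero]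
              · intro hi; exact absurd (Finset.mem_univ i) hi
          _ = ∑ i, v (z n i ⬝ᵥ β0 n) * sqNorm (wv i) := by
              rw [Finset.sum_comm]
              refine Finset.sum_congr rfl fun i _ => ?_
              rw [sqNorm, Finset.mul_sum]
              exact Finset.sum_congr rfl fun j _ => by ring
      have hEbound : ∫ ω, g ω ∂P ≤ W * Cmax * p n / (c ^ 2 * n) := by
        rw [hE]
        have hterm : ∀ i : Fin n, v (z n i ⬝ᵥ β0 n) * sqNorm (wv i)
            ≤ W * (sqNorm (z n i) / (c * n) ^ 2) := by
          intro i
          have h1 : sqNorm (wv i) = a i ^ 2 * sqNorm (F⁻¹ *ᵥ z n i) := by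
            rw [hwv]; exact sqNorm_smul _ _
          rw [h1]
          calc v (z n i ⬝ᵥ β0 n) * (a i ^ 2 * sqNorm (F⁻¹ *ᵥ z n i))
              = (a i ^ 2 * v (z n i ⬝ᵥ β0 n)) * sqNorm (F⁻¹ *ᵥ z n i) := by ring
            _ ≤ W * (sqNorm (z n i) / (c * n) ^ 2) :=
              mul_le_mul (hW n i) (hspec (z n i)) (sqNorm_nonneg _) hW0
        calc ∑ i, v (z n i ⬝ᵥ β0 n) * sqNorm (wv i)
            ≤ ∑ i, W * (sqNorm (z n i) / (c * n) ^ 2) := Finset.sum_le_sum fun i _ => hterm i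
          _ = (W / (c * n) ^ 2) * ∑ i, sqNorm (z n i) := by
              rw [Finset.mul_sum]
              exact Finset.sum_congr rfl fun i _ => by ring
          _ ≤ (W / (c * n) ^ 2) * (Cmax * n * p n) :=
              mul_le_mul_of_nonneg_left htr (by positivity)
          _ = W * Cmax * p n / (c ^ 2 * n) := by
              field_simp
      set t2 : ℝ := t ^ 2 * (p n / n) with ht2def
      have ht2 : 0 < t2 := mul_pos (pow_pos ht 2) (div_pos hp'' hn')
      have hsub : {ω | t * Real.sqrt ((p n : ℝ) / (n : ℝ)) <
            eNorm (F⁻¹ *ᵥ score (z n) h u (y n) (β0 n) ω)} ⊆ {ω | t2 ≤ g ω} := by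
        intro ω hω
        simp only [Set.mem_setOf_eq] at hω ⊢
        have h1 : t * Real.sqrt ((p n : ℝ) / (n : ℝ)) < Real.sqrt (g ω) := by
          rw [eNorm, hgterm ω] at hω; exact hω
        have hnn : 0 ≤ t * Real.sqrt ((p n : ℝ) / (n : ℝ)) := by positivity
        have h2 : (t * Real.sqrt ((p n : ℝ) / (n : ℝ))) ^ 2 < g ω := (Real.lt_sqrt hnn).1 h1
        refine le_of_lt (lt_of_le_of_lt (le_of_eq ?_) h2)
        rw [ht2def, mul_pow, Real.sq_sqrt (by positivity)]
      refine le_trans (measure_mono hsub)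
        (le_trans (cheb P g hgmeas hgnn hgint t2 ht2) (ENNReal.ofReal_le_ofReal ?_))
      refine le_trans ((div_le_div_iff_of_pos_right ht2).2 hEbound) (le_of_eq ?_)
      rw [ht2def]
      field_simp
  refine ⟨key, ?_⟩
  intro ε hε
  set q := max (W * Cmax) 0 / (c ^ 2 * ε) with hq
  have hq0 : 0 ≤ q := by rw [hq]; exact div_nonneg (le_max_right _ _) (by positivity)
  refine ⟨Real.sqrt q + 1, ?_⟩
  filter_upwards [eventually_gt_atTop 0] with n hn
  have hM0 : (0:ℝ) < Real.sqrt q + 1 := by positivity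
  have hset : {ω | (Real.sqrt q + 1) * Real.sqrt ((p n : ℝ) / (n : ℝ)) <
        |eNorm ((fisher (z n) h v (β0 n))⁻¹ *ᵥ score (z n) h u (y n) (β0 n) ω)|}
      = {ω | (Real.sqrt q + 1) * Real.sqrt ((p n : ℝ) / (n : ℝ)) <
        eNorm ((fisher (z n) h v (β0 n))⁻¹ *ᵥ score (z n) h u (y n) (β0 n) ω)} := by
    ext ω; simp [abs_of_nonneg (eNorm_nonneg _)]
  rw [hset]
  refine le_trans (key n hn _ hM0) (ENNReal.ofReal_le_ofReal ?_)
  have hM2 : q ≤ (Real.sqrt q + 1) ^ 2 := by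
    nlinarith [Real.sq_sqrt hq0, Real.sqrt_nonneg q]
  rw [div_le_iff₀ (by positivity)]
  have h1 : W * Cmax ≤ q * (c ^ 2 * ε) := by
    rw [hq, div_mul_cancel₀ _ (by positivity : (c ^ 2 * ε) ≠ 0)]
    exact le_max_left _ _
  nlinarith [mul_le_mul_of_nonneg_right hM2 (le_of_lt (by positivity : (0:ℝ) < c ^ 2 * ε)), h1]

end GLMPaper
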